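/- arXiv:2505.12003 — 2 statements merged into one kernel-verified Lean document; each statement's English description precedes it below -/
import Mathlib

section
/- Let d ∈ ℕ, σ = ReLU, and X ⊂ ℝ^d be a compact set with at least two points. Then for every 1-Lipschitz function f : X → ℝ (with respect to the Euclidean ℓ² norms) and every ε > 0, there exists a function g ∈ G_{d,σ}(X,ℝ), i.e. a 1-Lipschitz function of the form g = vᵀ ∘ Φ_L ∘ ⋯ ∘ Φ_1 ∘ Q with h, L ∈ ℕ, Q(x) = Q̂x + q̂ an affine map with Q̂ ∈ ℝ^{h×d}, q̂ ∈ ℝ^h, each Φ_ℓ ∈ E_{h,σ}, and v ∈ ℝ^h with ‖v‖₂ = 1, such that max_{x∈X} |f(x) − g(x)| < ε. -/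
open scoped BigOperators

noncomputable section

def relu (t : ℝ) : ℝ := max t 0

def entrywise {n : ℕ} (σ : ℝ → ℝ) (x : EuclideanSpace ℝ (Fin n)) : EuclideanSpace ℝ (Fin n) :=
  WithLp.toLp 2 (fun i => σ (x i))

def matVec {k h : ℕ} (W : Matrix (Fin k) (Fin h) ℝ) (x : EuclideanSpace ℝ (Fin h)) :
    EuclideanSpace ℝ (Fin k) :=
  Matrix.toEuclideanLin W x

/-- Spectral norm of a real matrix, as the operator norm between Euclidean spaces. -/
def specNorm {k h : ℕ} (W : Matrix (Fin k) (Fin h) ℝ) : ℝ :=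
  ‖LinearMap.toContinuousLinearMap (Matrix.toEuclideanLin W)‖

/-- Membership in `E_{h,σ}` with `σ = ReLU`. -/
def IsEulerStep {h : ℕ} (Φ : EuclideanSpace ℝ (Fin h) → EuclideanSpace ℝ (Fin h)) : Prop :=
  ∃ (k : ℕ) (W : Matrix (Fin k) (Fin h) ℝ) (b : EuclideanSpace ℝ (Fin k)) (τ : ℝ),
    0 ≤ τ ∧ τ ≤ 2 ∧ specNorm W ≤ 1 ∧
    ∀ x, Φ x = x - τ • matVec W.transpose (entrywise relu (matVec W x + b))

def compChain {α : Type*} : (L : ℕ) → (Fin L → α → α) → α → α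
  | 0, _, x => x
  | L + 1, Φ, x => Φ (Fin.last L) (compChain L (fun i => Φ i.castSucc) x)

/-- Membership in `G_{d,σ}(X,ℝ)` with `σ = ReLU`. -/
def InG {d : ℕ} (X : Set (EuclideanSpace ℝ (Fin d))) (g : EuclideanSpace ℝ (Fin d) → ℝ) : Prop :=
  LipschitzOnWith 1 g X ∧
  ∃ (h L : ℕ) (Qhat : Matrix (Fin h) (Fin d) ℝ) (qhat : EuclideanSpace ℝ (Fin h))
    (Φ : Fin L → (EuclideanSpace ℝ (Fin h) → EuclideanSpace ℝ (Fin h)))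
    (v : EuclideanSpace ℝ (Fin h)),
    (∀ ℓ, IsEulerStep (Φ ℓ)) ∧ ‖v‖ = 1 ∧
    ∀ x ∈ X, g x = ∑ i, v i * compChain L Φ (matVec Qhat x + qhat) i

def concatE {h₁ h₂ : ℕ} (u : EuclideanSpace ℝ (Fin h₁)) (v : EuclideanSpace ℝ (Fin h₂)) :
    EuclideanSpace ℝ (Fin (h₁ + h₂)) :=
  WithLp.toLp 2 (Fin.append (fun i => u i) (fun i => v i))

/-- The residual blocks in `Ẽ_{h,σ}`: `(max{x₁,x₂}, min{x₁,x₂}, x₃, Φ'(x₄,…,x_{h+3}))`. -/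
def tildeLayer {h : ℕ} (Φ' : EuclideanSpace ℝ (Fin h) → EuclideanSpace ℝ (Fin h))
    (x : EuclideanSpace ℝ (Fin (h + 3))) : EuclideanSpace ℝ (Fin (h + 3)) :=
  WithLp.toLp 2 (fun j : Fin (h + 3) =>
    if _h0 : (j : ℕ) = 0 then max (x ⟨0, by omega⟩) (x ⟨1, by omega⟩)
    else if _h1 : (j : ℕ) = 1 then min (x ⟨0, by omega⟩) (x ⟨1, by omega⟩)
    else if _h2 : (j : ℕ) = 2 then x ⟨2, by omega⟩
    else Φ' (WithLp.toLp 2 (fun i : Fin h => x ⟨(i : ℕ) + 3, by have := i.isLt; omega⟩))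
      ⟨(j : ℕ) - 3, by have := j.isLt; omega⟩)

/-- Membership in `Ẽ_{h,σ}` with `σ = ReLU`. -/
def IsTildeLayer {h : ℕ} (Φ : EuclideanSpace ℝ (Fin (h + 3)) → EuclideanSpace ℝ (Fin (h + 3))) :
    Prop :=
  ∃ Φ', IsEulerStep Φ' ∧ ∀ x, Φ x = tildeLayer Φ' x

def emb0 {n : ℕ} : Fin 1 → Fin (n + 3) := fun _ => ⟨0, by omega⟩
def emb1 {n : ℕ} : Fin 1 → Fin (n + 3) := fun _ => ⟨1, by omega⟩
def emb2 {n : ℕ} : Fin 1 → Fin (n + 3) := fun _ => ⟨2, by omega⟩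
def embT {n : ℕ} : Fin n → Fin (n + 3) := fun i => ⟨(i : ℕ) + 3, by have := i.isLt; omega⟩

/-- Membership in `R_{d,m}` for `m = (1,1,1,n)`: each block row of the matrix has spectral
norm at most `1`. -/
def memRm {d n : ℕ} (Q : Matrix (Fin (n + 3)) (Fin d) ℝ) : Prop :=
  specNorm (Q.submatrix emb0 id) ≤ 1 ∧ specNorm (Q.submatrix emb1 id) ≤ 1 ∧
    specNorm (Q.submatrix emb2 id) ≤ 1 ∧ specNorm (Q.submatrix embT id) ≤ 1

def rowBlockSum {n r : ℕ} (A : Matrix (Fin (n + 3)) (Fin (n + 3)) ℝ)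
    (e : Fin r → Fin (n + 3)) : ℝ :=
  specNorm (A.submatrix e emb0) + specNorm (A.submatrix e emb1) +
    specNorm (A.submatrix e emb2) + specNorm (A.submatrix e embT)

/-- Membership in `L_m` for `m = (1,1,1,n)`: for each block row, the sum of the spectral
norms of the blocks is at most `1`. -/
def memLm {n : ℕ} (A : Matrix (Fin (n + 3)) (Fin (n + 3)) ℝ) : Prop :=
  rowBlockSum A emb0 ≤ 1 ∧ rowBlockSum A emb1 ≤ 1 ∧
    rowBlockSum A emb2 ≤ 1 ∧ rowBlockSum A embT ≤ 1

/-- `Φ_{L+1} ∘ A_L ∘ ⋯ ∘ Φ₂ ∘ A₁ ∘ Φ₁`, the alternating composition. -/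
def altChain {α : Type*} : (L : ℕ) → (Fin (L + 1) → α → α) → (Fin L → α → α) → α → α
  | 0, Φ, _, x => Φ 0 x
  | L + 1, Φ, A, x =>
      Φ (Fin.last (L + 1)) (A (Fin.last L)
        (altChain L (fun i => Φ i.castSucc) (fun i => A i.castSucc) x))

/-- Membership in the fixed-width class `tilde-G_{d,σ,n+3}(X,ℝ)` with `σ = ReLU`. -/
def InTildeG {d n : ℕ} (X : Set (EuclideanSpace ℝ (Fin d)))
    (g : EuclideanSpace ℝ (Fin d) → ℝ) : Prop :=
  ∃ (L : ℕ) (Qhat : Matrix (Fin (n + 3)) (Fin d) ℝ) (qhat : EuclideanSpace ℝ (Fin (n + 3)))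
    (Φ : Fin (L + 1) → (EuclideanSpace ℝ (Fin (n + 3)) → EuclideanSpace ℝ (Fin (n + 3))))
    (Ahat : Fin L → Matrix (Fin (n + 3)) (Fin (n + 3)) ℝ)
    (ahat : Fin L → EuclideanSpace ℝ (Fin (n + 3)))
    (v : EuclideanSpace ℝ (Fin (n + 3))),
    memRm Qhat ∧ (∀ ℓ, IsTildeLayer (Φ ℓ)) ∧ (∀ ℓ, memLm (Ahat ℓ)) ∧ (∑ i, |v i|) ≤ 1 ∧
    ∀ x ∈ X,
      g x = ∑ i, v i *
        altChain L Φ (fun ℓ u => matVec (Ahat ℓ) u + ahat ℓ) (matVec Qhat x + qhat) i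

end

/-!
Cover `X` by finitely many `ε/3`-balls with centres `p i ∈ X` and put
`g x = max_i min_k (f (p i) + ⟪u i k, x - p i⟫)`, where `u i k` is the unit vector from `p k`
to `p i` (`0` if they coincide). As a max-min of `1`-Lipschitz affine functions, `g` is
`1`-Lipschitz. Taking the row `i` with `x` near `p i` gives `g x ≥ f x - 2 dist x (p i)`; in
every row the column `k` with `x` near `p k` gives a term
`≤ f (p k) + dist x (p k) ≤ f x + 2 dist x (p k)`.

To realize `g` in `G_{d,σ}`, let `Q` compute all the affine terms, one per coordinate. The layer
`x ↦ x - 2 wᵀ relu (w x)` with `w = (e_a - e_b)/√2` replaces `(x_a, x_b)` by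
`(min (x_a, x_b), max (x_a, x_b))`, so a sequence of such layers collects the row minima and
then their maximum in a single coordinate, which `v` reads off.
-/

open Finset

section EulerStep

variable {h : ℕ}

lemma matVec_apply {k : ℕ} (W : Matrix (Fin k) (Fin h) ℝ) (x : EuclideanSpace ℝ (Fin h))
    (i : Fin k) : matVec W x i = ∑ c, W i c * x c := rfl

lemma isEulerStep_rankOne (w : EuclideanSpace ℝ (Fin h)) (hw : ‖w‖ ≤ 1) (β : ℝ) {τ : ℝ}
    (hτ₀ : 0 ≤ τ) (hτ₂ : τ ≤ 2) :
    IsEulerStep fun x => x - (τ * relu (inner ℝ w x + β)) • w := by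
  set W : Matrix (Fin 1) (Fin h) ℝ := Matrix.replicateRow (Fin 1) w
  have hW : ∀ x, matVec W x = WithLp.toLp 2 (fun _ => inner ℝ w x) := by
    intro x
    ext i
    simp [matVec_apply, W, PiLp.inner_apply, mul_comm]
  refine ⟨1, W, WithLp.toLp 2 (fun _ => β), τ, hτ₀, hτ₂, ?_, fun x => ?_⟩
  · refine ContinuousLinearMap.opNorm_le_bound _ zero_le_one fun x => ?_
    change ‖matVec W x‖ ≤ 1 * ‖x‖
    rw [hW, EuclideanSpace.norm_eq]
    simp only [univ_unique, sum_singleton, Real.norm_eq_abs, sq_abs, Real.sqrt_sq_eq_abs]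
    calc |inner ℝ w x| ≤ ‖w‖ * ‖x‖ := abs_real_inner_le_norm _ _
      _ ≤ 1 * ‖x‖ := by gcongr
  · ext c
    simp only [PiLp.sub_apply, PiLp.smul_apply, smul_eq_mul, Matrix.transpose_replicateRow,
      entrywise, hW, PiLp.add_apply, matVec_apply, Matrix.replicateCol_apply, Fin.sum_univ_one, W]
    ring

noncomputable def sortPair (a b : Fin h) (x : EuclideanSpace ℝ (Fin h)) :
    EuclideanSpace ℝ (Fin h) :=
  x - relu (x a - x b) • (EuclideanSpace.single a 1 - EuclideanSpace.single b 1)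

variable {a b : Fin h}

lemma sortPair_apply_left (hab : a ≠ b) (x : EuclideanSpace ℝ (Fin h)) :
    sortPair a b x a = min (x a) (x b) := by
  simp only [sortPair, relu, PiLp.sub_apply, PiLp.smul_apply, PiLp.single_apply, if_neg hab]
  rcases le_total (x a) (x b) with hle | hle
  · simp [min_eq_left hle, max_eq_right (sub_nonpos.2 hle)]
  · simp [min_eq_right hle, max_eq_left (sub_nonneg.2 hle)]

lemma sortPair_apply_right (hab : a ≠ b) (x : EuclideanSpace ℝ (Fin h)) :
    sortPair a b x b = max (x a) (x b) := by
  simp only [sortPair, relu, PiLp.sub_apply, PiLp.smul_apply, PiLp.single_apply, if_neg hab.symm]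
  rcases le_total (x a) (x b) with hle | hle
  · simp [max_eq_right hle, max_eq_right (sub_nonpos.2 hle)]
  · simp [max_eq_left hle, max_eq_left (sub_nonneg.2 hle)]

lemma sortPair_apply_of_ne {c : Fin h} (hca : c ≠ a) (hcb : c ≠ b)
    (x : EuclideanSpace ℝ (Fin h)) : sortPair a b x c = x c := by
  simp [sortPair, hca, hcb]

lemma isEulerStep_sortPair (hab : a ≠ b) : IsEulerStep (sortPair a b) := by
  set e : EuclideanSpace ℝ (Fin h) := EuclideanSpace.single a 1 - EuclideanSpace.single b 1
  have he : ‖e‖ = √2 := by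
    rw [← Real.sqrt_sq (norm_nonneg e), norm_sub_sq_real]
    norm_num [EuclideanSpace.inner_single_left, hab.symm]
  have hex : ∀ x, inner ℝ e x = x a - x b := by
    simp [e, inner_sub_left, EuclideanSpace.inner_single_left]
  have hw : ‖(√2)⁻¹ • e‖ ≤ 1 := by
    rw [norm_smul, he, norm_inv, Real.norm_of_nonneg (Real.sqrt_nonneg 2),
      inv_mul_cancel₀ (by positivity)]
  convert isEulerStep_rankOne _ hw 0 zero_le_two le_rfl using 2 with x
  have hrelu : relu ((√2)⁻¹ * (x a - x b)) = (√2)⁻¹ * relu (x a - x b) := by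
    simp only [relu, mul_max_of_nonneg _ _ (inv_nonneg.2 (Real.sqrt_nonneg 2)), mul_zero]
  rw [real_inner_smul_left, hex, add_zero, hrelu, smul_smul, sortPair]
  congr 2
  field_simp
  rw [Real.sq_sqrt zero_le_two]

end EulerStep

section EulerChain

variable {h : ℕ}

def IsEulerChain (F : EuclideanSpace ℝ (Fin h) → EuclideanSpace ℝ (Fin h)) : Prop :=
  ∃ (L : ℕ) (Φ : Fin L → EuclideanSpace ℝ (Fin h) → EuclideanSpace ℝ (Fin h)),
    (∀ ℓ, IsEulerStep (Φ ℓ)) ∧ compChain L Φ = F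

lemma isEulerChain_id : IsEulerChain (h := h) id :=
  ⟨0, Fin.elim0, fun ℓ => ℓ.elim0, rfl⟩

namespace IsEulerChain

variable {F G Ψ : EuclideanSpace ℝ (Fin h) → EuclideanSpace ℝ (Fin h)}

lemma step_comp (hF : IsEulerChain F) (hΨ : IsEulerStep Ψ) : IsEulerChain (Ψ ∘ F) := by
  obtain ⟨L, Φ, hΦ, rfl⟩ := hF
  refine ⟨L + 1, Fin.snoc Φ Ψ, Fin.lastCases (by simpa using hΨ) (by simpa using hΦ), ?_⟩
  funext x
  simp [compChain]

lemma comp (hG : IsEulerChain G) (hF : IsEulerChain F) : IsEulerChain (G ∘ F) := by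
  obtain ⟨L, Φ, hΦ, rfl⟩ := hG
  induction L with
  | zero => exact hF
  | succ L ih =>
    have hsplit : compChain (L + 1) Φ ∘ F =
        Φ (Fin.last L) ∘ (compChain L (fun i => Φ i.castSucc) ∘ F) := rfl
    rw [hsplit]
    exact (ih _ fun i => hΦ _).step_comp (hΦ _)

end IsEulerChain

lemma exists_isEulerChain_inf' {p : Fin h} {T : Finset (Fin h)} (hp : p ∈ T) :
    ∃ F, IsEulerChain F ∧ ∀ s, F s p = T.inf' ⟨p, hp⟩ (fun c => s c) ∧ ∀ c ∉ T, F s c = s c := by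
  obtain ⟨T, hpT, rfl⟩ : ∃ T', p ∉ T' ∧ T = insert p T' :=
    ⟨T.erase p, notMem_erase p T, (insert_erase hp).symm⟩
  induction T using Finset.induction_on with
  | empty => exact ⟨id, isEulerChain_id, fun s => by simp⟩
  | insert j T hjT ih =>
    have hpj : p ≠ j := fun h => hpT (h ▸ mem_insert_self _ _)
    obtain ⟨F, hF, hFs⟩ := ih (fun h => hpT (mem_insert_of_mem h)) (mem_insert_self p T)
    refine ⟨sortPair p j ∘ F, hF.step_comp (isEulerStep_sortPair hpj),
      fun s => ⟨?_, fun c hc => ?_⟩⟩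
    · have hFj : F s j = s j := (hFs s).2 j (by simp [hpj.symm, hjT])
      rw [Function.comp_apply, sortPair_apply_left hpj, (hFs s).1, hFj]
      simp only [insert_comm p j T]
      rw [inf'_insert (insert_nonempty p T)]
      exact inf_comm _ _
    · simp only [mem_insert, not_or] at hc
      rw [Function.comp_apply, sortPair_apply_of_ne hc.1 hc.2.1,
        (hFs s).2 c (by simp [hc.1, hc.2.2])]

lemma exists_isEulerChain_sup' {q : Fin h} {T : Finset (Fin h)} (hq : q ∈ T) :
    ∃ F, IsEulerChain F ∧ ∀ s, F s q = T.sup' ⟨q, hq⟩ (fun c => s c) ∧ ∀ c ∉ T, F s c = s c := by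
  obtain ⟨T, hqT, rfl⟩ : ∃ T', q ∉ T' ∧ T = insert q T' :=
    ⟨T.erase q, notMem_erase q T, (insert_erase hq).symm⟩
  induction T using Finset.induction_on with
  | empty => exact ⟨id, isEulerChain_id, fun s => by simp⟩
  | insert j T hjT ih =>
    have hjq : j ≠ q := fun h => hqT (h ▸ mem_insert_self _ _)
    obtain ⟨F, hF, hFs⟩ := ih (fun h => hqT (mem_insert_of_mem h)) (mem_insert_self q T)
    refine ⟨sortPair j q ∘ F, hF.step_comp (isEulerStep_sortPair hjq),
      fun s => ⟨?_, fun c hc => ?_⟩⟩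
    · have hFj : F s j = s j := (hFs s).2 j (by simp [hjq, hjT])
      rw [Function.comp_apply, sortPair_apply_right hjq, (hFs s).1, hFj]
      simp only [insert_comm q j T]
      rw [sup'_insert (insert_nonempty q T)]
    · simp only [mem_insert, not_or] at hc
      rw [Function.comp_apply, sortPair_apply_of_ne hc.2.1 hc.1,
        (hFs s).2 c (by simp [hc.1, hc.2.2])]

end EulerChain

section MaxMinNetwork

variable {h : ℕ} {ι κ : Type*} [Fintype κ] (e : ι × κ ≃ Fin h)

lemma exists_isEulerChain_rowInf' (j₀ : κ) (R : Finset ι) :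
    ∃ F, IsEulerChain F ∧ ∀ s,
      (∀ i ∈ R, F s (e (i, j₀)) = univ.inf' ⟨j₀, mem_univ _⟩ fun j => s (e (i, j))) ∧
      ∀ i ∉ R, ∀ j, F s (e (i, j)) = s (e (i, j)) := by
  classical
  induction R using Finset.induction_on with
  | empty => exact ⟨id, isEulerChain_id, fun s => by simp⟩
  | insert i R hiR ih =>
    obtain ⟨F, hF, hFs⟩ := ih
    obtain ⟨G, hG, hGs⟩ :=
      exists_isEulerChain_inf' (mem_image_of_mem (fun j => e (i, j)) (mem_univ j₀))
    have hG_off : ∀ s, ∀ i' ≠ i, ∀ j, G s (e (i', j)) = s (e (i', j)) := fun s i' hi' j =>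
      (hGs s).2 _ (by simp [hi'.symm])
    refine ⟨G ∘ F, hG.comp hF, fun s => ⟨fun i' hi' => ?_, fun i' hi' j => ?_⟩⟩
    · rcases mem_insert.1 hi' with rfl | hi'R
      · rw [Function.comp_apply, (hGs _).1]
        exact (inf'_image _ _).trans (inf'_congr _ rfl fun j _ => (hFs s).2 _ hiR j)
      · rw [Function.comp_apply, hG_off _ _ (ne_of_mem_of_not_mem hi'R hiR), (hFs s).1 _ hi'R]
    · rw [mem_insert, not_or] at hi'
      rw [Function.comp_apply, hG_off _ _ hi'.1, (hFs s).2 _ hi'.2]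

lemma exists_isEulerChain_sup'_inf' [Fintype ι] [Nonempty ι] [Nonempty κ] :
    ∃ (o : Fin h) (F : EuclideanSpace ℝ (Fin h) → EuclideanSpace ℝ (Fin h)), IsEulerChain F ∧
      ∀ s, F s o = univ.sup' univ_nonempty fun i => univ.inf' univ_nonempty fun j => s (e (i, j)) := by
  obtain ⟨i₀⟩ := ‹Nonempty ι›
  obtain ⟨j₀⟩ := ‹Nonempty κ›
  obtain ⟨F, hF, hFs⟩ := exists_isEulerChain_rowInf' e j₀ univ
  obtain ⟨G, hG, hGs⟩ :=
    exists_isEulerChain_sup' (mem_image_of_mem (fun i => e (i, j₀)) (mem_univ i₀))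
  refine ⟨e (i₀, j₀), G ∘ F, hG.comp hF, fun s => ?_⟩
  rw [Function.comp_apply, (hGs _).1]
  exact (sup'_image _ _).trans (sup'_congr _ rfl fun i _ => (hFs s).1 i (mem_univ i))

end MaxMinNetwork

section LipschitzFinset

variable {α ι : Type*} [PseudoMetricSpace α] {s : Finset ι} {f : ι → α → ℝ} {K : NNReal}

lemma LipschitzWith.finset_sup'_apply (hs : s.Nonempty) (hf : ∀ i ∈ s, LipschitzWith K (f i)) :
    LipschitzWith K fun x => s.sup' hs fun i => f i x :=
  LipschitzWith.of_le_add_mul K fun x y => sup'_le _ _ fun i hi =>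
    ((hf i hi).le_add_mul x y).trans (by gcongr; exact le_sup' (fun i => f i y) hi)

lemma LipschitzWith.finset_inf'_apply (hs : s.Nonempty) (hf : ∀ i ∈ s, LipschitzWith K (f i)) :
    LipschitzWith K fun x => s.inf' hs fun i => f i x :=
  LipschitzWith.of_le_add_mul K fun x y => by
    rw [← sub_le_iff_le_add]
    exact le_inf' _ _ fun i hi => sub_le_iff_le_add.2 <|
      (inf'_le (fun i => f i x) hi).trans ((hf i hi).le_add_mul x y)

end LipschitzFinset

section MaxMinAffine

variable {V : Type*} [NormedAddCommGroup V] [InnerProductSpace ℝ V]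

lemma norm_normalize_le_one (x : V) : ‖NormedSpace.normalize x‖ ≤ 1 := by
  rcases eq_or_ne x 0 with rfl | hx
  · simp [NormedSpace.normalize_zero_eq_zero]
  · exact (NormedSpace.norm_normalize_eq_one_iff.2 hx).le

lemma real_inner_normalize_self (x : V) : inner ℝ (NormedSpace.normalize x) x = ‖x‖ := by
  rcases eq_or_ne x 0 with rfl | hx
  · simp
  · rw [NormedSpace.normalize, real_inner_smul_left, real_inner_self_eq_norm_sq]
    field_simp

lemma lipschitzWith_inner_add_const {w : V} (hw : ‖w‖ ≤ 1) (β : ℝ) :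
    LipschitzWith 1 fun x => inner ℝ w x + β :=
  LipschitzWith.of_le_add fun x y => by
    have := real_inner_le_norm w (x - y)
    rw [inner_sub_right, dist_eq_norm] at *
    nlinarith [norm_nonneg (x - y)]

variable {ι κ : Type*} [Fintype ι] [Nonempty ι] [Fintype κ] [Nonempty κ]

noncomputable def maxMinAffine (w : ι → κ → V) (β : ι → κ → ℝ) (x : V) : ℝ :=
  univ.sup' univ_nonempty fun i => univ.inf' univ_nonempty fun j => inner ℝ (w i j) x + β i j

lemma lipschitzWith_maxMinAffine {w : ι → κ → V} (hw : ∀ i j, ‖w i j‖ ≤ 1) (β : ι → κ → ℝ) :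
    LipschitzWith 1 (maxMinAffine w β) :=
  LipschitzWith.finset_sup'_apply _ fun i _ => LipschitzWith.finset_inf'_apply _ fun j _ =>
    lipschitzWith_inner_add_const (hw i j) (β i j)

noncomputable def lipschitzInterp (f : V → ℝ) (p : ι → V) : V → ℝ :=
  maxMinAffine (fun i k => NormedSpace.normalize (p i - p k))
    fun i k => f (p i) - inner ℝ (NormedSpace.normalize (p i - p k)) (p i)

variable {X : Set V} {f : V → ℝ} {p : ι → V} {x : V}

lemma sub_le_lipschitzInterp (hf : LipschitzOnWith 1 f X) (hpX : ∀ i, p i ∈ X) (hx : x ∈ X)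
    (i : ι) : f x - 2 * dist x (p i) ≤ lipschitzInterp f p x := by
  refine le_sup'_of_le _ (mem_univ i) (le_inf' _ _ fun k _ => ?_)
  have hfx : f x ≤ f (p i) + dist x (p i) := by
    simpa using hf.le_add_mul hx (hpX i)
  have hinner : -dist x (p i) ≤ inner ℝ (NormedSpace.normalize (p i - p k)) (x - p i) := by
    rw [dist_eq_norm, neg_le]
    refine (neg_le_abs _).trans ((abs_real_inner_le_norm _ _).trans ?_)
    simpa using mul_le_mul_of_nonneg_right (norm_normalize_le_one (p i - p k))
      (norm_nonneg (x - p i))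
  rw [inner_sub_right] at hinner
  linarith

lemma lipschitzInterp_le_add (hf : LipschitzOnWith 1 f X) (hpX : ∀ i, p i ∈ X) (hx : x ∈ X)
    (k : ι) : lipschitzInterp f p x ≤ f x + 2 * dist x (p k) := by
  unfold lipschitzInterp maxMinAffine
  refine sup'_le _ _ fun i _ => inf'_le_of_le _ (mem_univ k) ?_
  have hfp : f (p i) ≤ f (p k) + ‖p i - p k‖ := by
    simpa [dist_eq_norm] using hf.le_add_mul (hpX i) (hpX k)
  have hfk : f (p k) ≤ f x + dist x (p k) := by
    simpa [dist_comm] using hf.le_add_mul (hpX k) hx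
  have hinner : inner ℝ (NormedSpace.normalize (p i - p k)) (x - p k) ≤ dist x (p k) := by
    rw [dist_eq_norm]
    simpa using (real_inner_le_norm _ _).trans
      (mul_le_mul_of_nonneg_right (norm_normalize_le_one (p i - p k)) (norm_nonneg (x - p k)))
  have key : inner ℝ (NormedSpace.normalize (p i - p k)) (x - p i) ≤
      dist x (p k) - ‖p i - p k‖ := by
    rw [show x - p i = (x - p k) - (p i - p k) by abel, inner_sub_right,
      real_inner_normalize_self]
    linarith
  rw [inner_sub_right] at key
  linarith

end MaxMinAffine

lemma inG_maxMinAffine {d : ℕ} (X : Set (EuclideanSpace ℝ (Fin d))) {ι κ : Type*} [Fintype ι]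
    [Nonempty ι] [Fintype κ] [Nonempty κ] {w : ι → κ → EuclideanSpace ℝ (Fin d)}
    (hw : ∀ i j, ‖w i j‖ ≤ 1) (β : ι → κ → ℝ) : InG X (maxMinAffine w β) := by
  let e := Fintype.equivFin (ι × κ)
  obtain ⟨o, F, ⟨L, Φ, hΦ, rfl⟩, hFo⟩ := exists_isEulerChain_sup'_inf' e
  refine ⟨(lipschitzWith_maxMinAffine hw β).lipschitzOnWith, _, L,
    Matrix.of fun r c => w (e.symm r).1 (e.symm r).2 c,
    WithLp.toLp 2 fun r => β (e.symm r).1 (e.symm r).2,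
    Φ, EuclideanSpace.single o 1, hΦ, by simp, fun x _ => ?_⟩
  simp only [PiLp.single_apply, ite_mul, one_mul, zero_mul, sum_ite_eq', mem_univ, if_true, hFo]
  simp [maxMinAffine, matVec_apply, PiLp.inner_apply, mul_comm]

/-- Universal approximation of scalar `1`-Lipschitz functions on a compact
set with at least two points by the class `G_{d,ReLU}(X,ℝ)`. -/
theorem stmt0 (d : ℕ) (X : Set (EuclideanSpace ℝ (Fin d)))
    (hX : IsCompact X) (htwo : ∃ x ∈ X, ∃ y ∈ X, x ≠ y)
    (f : EuclideanSpace ℝ (Fin d) → ℝ) (hf : LipschitzOnWith 1 f X)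
    (ε : ℝ) (hε : 0 < ε) :
    ∃ g : EuclideanSpace ℝ (Fin d) → ℝ, InG X g ∧ ∀ x ∈ X, |f x - g x| < ε := by
  obtain ⟨x₀, hx₀, -⟩ := htwo
  obtain ⟨t, htX, htfin, hcov⟩ := finite_cover_balls_of_compact hX (by positivity : 0 < ε / 3)
  have hnet : ∀ x ∈ X, ∃ y : t, dist x y < ε / 3 := fun x hx => by
    obtain ⟨y, hy, hxy⟩ := Set.mem_iUnion₂.1 (hcov hx)
    exact ⟨⟨y, hy⟩, hxy⟩
  have : Fintype t := htfin.fintype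
  have : Nonempty t := (hnet x₀ hx₀).nonempty
  have hpX : ∀ y : t, (y : EuclideanSpace ℝ (Fin d)) ∈ X := fun y => htX y.2
  refine ⟨lipschitzInterp f ((↑) : t → EuclideanSpace ℝ (Fin d)),
    inG_maxMinAffine X (fun _ _ => norm_normalize_le_one _) _, fun x hx => ?_⟩
  obtain ⟨y, hy⟩ := hnet x hx
  have hlow := sub_le_lipschitzInterp hf hpX hx y
  have hup := lipschitzInterp_le_add hf hpX hx y
  rw [abs_sub_lt_iff]
  constructor <;> linarith
end

section
/- Let σ : ℝ → ℝ be 1-Lipschitz and non-decreasing, and define Φ : ℝ^h → ℝ^h by Φ(x) = x − τ Wᵀ σ(Wx + b), where σ acts entrywise, W ∈ ℝ^{k×h}, b ∈ ℝ^k, and τ ∈ ℝ satisfies 0 ≤ τ and τ‖W‖₂² ≤ 2 (with ‖W‖₂ the spectral norm). Then Φ is 1-Lipschitz with respect to the Euclidean ℓ² norm, i.e. ‖Φ(y) − Φ(x)‖₂ ≤ ‖y − x‖₂ for all x, y ∈ ℝ^h. -/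
open scoped BigOperators

/-! With `u = y - x` and `Δ = σ(Wy + b) - σ(Wx + b)`, a monotone 1-Lipschitz `σ` satisfies
`(σ s - σ t)² ≤ (σ s - σ t)(s - t)`, so summing over coordinates `‖Δ‖² ≤ ⟪Wu, Δ⟫ = ⟪u, WᵀΔ⟫`.
Expanding the square then gives `‖u - τWᵀΔ‖² ≤ ‖u‖² - τ(2 - τ‖W‖²)‖Δ‖² ≤ ‖u‖²`. -/

open scoped Matrix RealInnerProductSpace Matrix.Norms.L2Operator

theorem sq_sub_le_mul_sub_of_lipschitzWith_one {σ : ℝ → ℝ} (hσ : LipschitzWith 1 σ)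
    (hmono : Monotone σ) (s t : ℝ) : (σ s - σ t) ^ 2 ≤ (σ s - σ t) * (s - t) := by
  have hlip : |σ s - σ t| ≤ |s - t| := by simpa [Real.dist_eq] using hσ.dist_le_mul s t
  have hsign : 0 ≤ (σ s - σ t) * (s - t) := by
    rcases le_total t s with hts | hst
    · exact mul_nonneg (sub_nonneg.2 (hmono hts)) (sub_nonneg.2 hts)
    · exact mul_nonneg_of_nonpos_of_nonpos (sub_nonpos.2 (hmono hst)) (sub_nonpos.2 hst)
  calc (σ s - σ t) ^ 2 = |σ s - σ t| * |σ s - σ t| := by rw [abs_mul_abs_self, sq]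
    _ ≤ |σ s - σ t| * |s - t| := mul_le_mul_of_nonneg_left hlip (abs_nonneg _)
    _ = (σ s - σ t) * (s - t) := by rw [← abs_mul, abs_of_nonneg hsign]

theorem norm_entrywise_sub_sq_le_inner {n : ℕ} {σ : ℝ → ℝ} (hσ : LipschitzWith 1 σ)
    (hmono : Monotone σ) (s t : EuclideanSpace ℝ (Fin n)) :
    ‖entrywise σ s - entrywise σ t‖ ^ 2 ≤ ⟪s - t, entrywise σ s - entrywise σ t⟫ := by
  rw [← real_inner_self_eq_norm_sq, PiLp.inner_apply, PiLp.inner_apply]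
  refine Finset.sum_le_sum fun i _ => ?_
  simpa [entrywise, sq, mul_comm] using sq_sub_le_mul_sub_of_lipschitzWith_one hσ hmono (s i) (t i)

theorem norm_sub_smul_apply_le_of_sq_norm_le_inner {E F : Type*} [SeminormedAddCommGroup E]
    [InnerProductSpace ℝ E] [SeminormedAddCommGroup F] [NormedSpace ℝ F] (B : F →L[ℝ] E)
    {u : E} {Δ : F} {τ : ℝ} (hτ0 : 0 ≤ τ) (hτ : τ * ‖B‖ ^ 2 ≤ 2)
    (hΔ : ‖Δ‖ ^ 2 ≤ ⟪u, B Δ⟫) : ‖u - τ • B Δ‖ ≤ ‖u‖ := by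
  have hBΔ : ‖B Δ‖ ≤ ‖B‖ * ‖Δ‖ := B.le_opNorm Δ
  refine (pow_le_pow_iff_left₀ (norm_nonneg _) (norm_nonneg _) two_ne_zero).1 ?_
  calc ‖u - τ • B Δ‖ ^ 2 = ‖u‖ ^ 2 - 2 * τ * ⟪u, B Δ⟫ + τ ^ 2 * ‖B Δ‖ ^ 2 := by
        rw [norm_sub_sq_real, real_inner_smul_right, norm_smul, Real.norm_of_nonneg hτ0]; ring
    _ ≤ ‖u‖ ^ 2 - 2 * τ * ‖Δ‖ ^ 2 + τ ^ 2 * (‖B‖ * ‖Δ‖) ^ 2 := by gcongr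
    _ = ‖u‖ ^ 2 - τ * (2 - τ * ‖B‖ ^ 2) * ‖Δ‖ ^ 2 := by ring
    _ ≤ ‖u‖ ^ 2 := sub_le_self _ (by have := sub_nonneg.2 hτ; positivity)

theorem specNorm_eq_l2_opNorm {k h : ℕ} (W : Matrix (Fin k) (Fin h) ℝ) : specNorm W = ‖W‖ := rfl

theorem specNorm_transpose {k h : ℕ} (W : Matrix (Fin k) (Fin h) ℝ) : specNorm Wᵀ = specNorm W := by
  rw [specNorm_eq_l2_opNorm, specNorm_eq_l2_opNorm, ← Matrix.conjTranspose_eq_transpose_of_trivial,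
    Matrix.l2_opNorm_conjTranspose]

theorem inner_matVec_transpose {k h : ℕ} (W : Matrix (Fin k) (Fin h) ℝ)
    (u : EuclideanSpace ℝ (Fin h)) (Δ : EuclideanSpace ℝ (Fin k)) :
    ⟪u, matVec Wᵀ Δ⟫ = ⟪matVec W u, Δ⟫ := by
  rw [matVec, matVec, ← Matrix.conjTranspose_eq_transpose_of_trivial,
    Matrix.toEuclideanLin_conjTranspose_eq_adjoint, LinearMap.adjoint_inner_right]

/-- A residual layer `x ↦ x - τ Wᵀ σ(Wx + b)` with `σ` 1-Lipschitz and
non-decreasing, `0 ≤ τ` and `τ‖W‖₂² ≤ 2`, is `1`-Lipschitz in the Euclidean norm. -/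
theorem stmt1 (h k : ℕ) (σ : ℝ → ℝ) (hσ : LipschitzWith 1 σ) (hmono : Monotone σ)
    (W : Matrix (Fin k) (Fin h) ℝ) (b : EuclideanSpace ℝ (Fin k)) (τ : ℝ)
    (hτ0 : 0 ≤ τ) (hτ : τ * specNorm W ^ 2 ≤ 2) :
    ∀ x y : EuclideanSpace ℝ (Fin h),
      ‖(y - τ • matVec W.transpose (entrywise σ (matVec W y + b))) -
        (x - τ • matVec W.transpose (entrywise σ (matVec W x + b)))‖ ≤ ‖y - x‖ := by
  intro x y
  set Δ := entrywise σ (matVec W y + b) - entrywise σ (matVec W x + b)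
  have hstep : (y - τ • matVec Wᵀ (entrywise σ (matVec W y + b))) -
      (x - τ • matVec Wᵀ (entrywise σ (matVec W x + b))) = (y - x) - τ • matVec Wᵀ Δ := by
    simp only [Δ, matVec, map_sub, smul_sub]
    abel
  have hpre : matVec W (y - x) = (matVec W y + b) - (matVec W x + b) := by
    simp only [matVec, map_sub, add_sub_add_right_eq_sub]
  have hΔ : ‖Δ‖ ^ 2 ≤ ⟪y - x, matVec Wᵀ Δ⟫ := by
    rw [inner_matVec_transpose, hpre]
    exact norm_entrywise_sub_sq_le_inner hσ hmono _ _
  rw [hstep]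
  exact norm_sub_smul_apply_le_of_sq_norm_le_inner
    (LinearMap.toContinuousLinearMap (Matrix.toEuclideanLin Wᵀ)) hτ0
    (by rwa [← specNorm_transpose] at hτ) hΔ
end
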